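/- Let c ∈ ℝ with c² ≠ 1, T > 0, λ ∈ ℂ, and let Q : ℝ → ℝ be continuous. Let w₁, w₂ : ℝ → ℂ be the unique solutions of the spectral problem (c²−1)w'' − 2cλw' + (λ² + Q(z))w = 0 with w₁(0) = 1, w₁'(0) = 0, w₂(0) = 0, w₂'(0) = 1, and let y₁, y₂ : ℝ → ℂ be the unique solutions of Hill's equation y'' + (Q(z)/(c²−1))y = ν y, with ν := (λ/(c²−1))², satisfying y₁(0) = 1, y₁'(0) = 0, y₂(0) = 0, y₂'(0) = 1. Set a := cλ/(c²−1), M := [[w₁(T), w₂(T)], [w₁'(T), w₂'(T)]], Mᴴ := [[y₁(T), y₂(T)], [y₁'(T), y₂'(T)]], and C := [[1, 0], [a, 1]]. Then M = e^{aT}·C·Mᴴ·C⁻¹. In particular, μ ∈ ℂ is an eigenvalue of Mᴴ if and only if e^{aT}·μ is an eigenvalue of M, i.e., the Floquet multipliers of the spectral problem are e^{cλT/(c²−1)} times those of Hill's equation. -/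

import Mathlib

/-!
The substitution `w = e^{az} u` with `a = cλ/(c²-1)` removes the first-order term of the
Klein–Gordon equation and leaves Hill's equation `u'' = (ν - Q/(c²-1)) u`, since
`a² - λ²/(c²-1) = ν`. Wronskians of solutions of Hill's equation are constant, so every solution
is `u(0) y₁ + u'(0) y₂`; hence `w₁ = e^{az} (y₁ - a y₂)` and `w₂ = e^{az} y₂`, which is the identity
`M = e^{aT} C Mᴴ C⁻¹`. Conjugation preserves the spectrum and scaling by `e^{aT}` scales it.
-/

open Real Filter Set

noncomputable section

/-- The (Floquet) spectrum of the linearized Klein--Gordon spectral problem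
`(c^2-1) w'' - 2 c lam w' + (lam^2 + Q z) w = 0`: the set of `lam : ℂ` for which
there is a nontrivial bounded solution `w : ℝ → ℂ`. -/
def KGSpectrum (c : ℝ) (Q : ℝ → ℝ) : Set ℂ :=
  {lam : ℂ | ∃ w wd wdd : ℝ → ℂ,
    (∀ z, HasDerivAt w (wd z) z) ∧ (∀ z, HasDerivAt wd (wdd z) z) ∧
    (∀ z : ℝ, ((c : ℂ) ^ 2 - 1) * wdd z - 2 * (c : ℂ) * lam * wd z
        + (lam ^ 2 + (Q z : ℂ)) * w z = 0) ∧
    (∃ z, w z ≠ 0) ∧ (∃ M : ℝ, ∀ z, ‖w z‖ ≤ M)}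

/-- The wave exhibits a dynamical Hamiltonian–Hopf instability at `lam` if every
neighborhood of `lam` contains a point of the spectrum that is not purely imaginary. -/
def HasDHHInstabilityAt (c : ℝ) (Q : ℝ → ℝ) (lam : ℂ) : Prop :=
  ∀ U ∈ nhds lam, ∃ μ ∈ KGSpectrum c Q, μ ∈ U ∧ μ.re ≠ 0

/-- `y1, y2` (with derivatives `y1d, y2d`) are the canonical fundamental solutions of
Hill's equation `y'' + P y = ν y` with `y1(0)=1, y1'(0)=0, y2(0)=0, y2'(0)=1`,
for every value of the spectral parameter `ν`. -/
def IsHillFundamental (P : ℝ → ℝ) (y1 y1d y2 y2d : ℝ → ℝ → ℝ) : Prop :=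
  ∀ ν : ℝ,
    (∀ z, HasDerivAt (y1 ν) (y1d ν z) z) ∧
    (∀ z, HasDerivAt (y1d ν) (ν * y1 ν z - P z * y1 ν z) z) ∧
    (∀ z, HasDerivAt (y2 ν) (y2d ν z) z) ∧
    (∀ z, HasDerivAt (y2d ν) (ν * y2 ν z - P z * y2 ν z) z) ∧
    y1 ν 0 = 1 ∧ y1d ν 0 = 0 ∧ y2 ν 0 = 0 ∧ y2d ν 0 = 1

def SolvesHill (p : ℝ → ℂ) (u ud : ℝ → ℂ) : Prop :=
  ∀ z, HasDerivAt u (ud z) z ∧ HasDerivAt ud (p z * u z) z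

namespace SolvesHill

variable {p u ud f fd g gd : ℝ → ℂ}

theorem wronskian_eq (hf : SolvesHill p f fd) (hg : SolvesHill p g gd) (z : ℝ) :
    f z * gd z - fd z * g z = f 0 * gd 0 - fd 0 * g 0 := by
  have hW : ∀ x, HasDerivAt (fun x => f x * gd x - fd x * g x) 0 x := fun x => by
    obtain ⟨hf, hfd⟩ := hf x
    obtain ⟨hg, hgd⟩ := hg x
    exact ((hf.mul hgd).sub (hfd.mul hg)).congr_deriv (by ring)
  exact is_const_of_deriv_eq_zero (fun x => (hW x).differentiableAt) (fun x => (hW x).deriv) z 0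

theorem eq_fundamental_combination (hu : SolvesHill p u ud) {y1 y1d y2 y2d : ℝ → ℂ}
    (h1 : SolvesHill p y1 y1d) (h2 : SolvesHill p y2 y2d)
    (h1i : y1 0 = 1) (h1di : y1d 0 = 0) (h2i : y2 0 = 0) (h2di : y2d 0 = 1) (z : ℝ) :
    u z = u 0 * y1 z + ud 0 * y2 z ∧ ud z = u 0 * y1d z + ud 0 * y2d z := by
  have W12 := h1.wronskian_eq h2 z
  have Wu1 := hu.wronskian_eq h1 z
  have Wu2 := hu.wronskian_eq h2 z
  simp only [h1i, h1di, h2i, h2di] at W12 Wu1 Wu2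
  -- `u · W(y₁, y₂) = y₁ · W(u, y₂) - y₂ · W(u, y₁)`, and likewise for `u'`
  constructor
  · linear_combination (-u z) * W12 + y1 z * Wu2 - y2 z * Wu1
  · linear_combination (-ud z) * W12 + y1d z * Wu2 - y2d z * Wu1

end SolvesHill

theorem hasDerivAt_cexp_mul_ofReal (a : ℂ) (z : ℝ) :
    HasDerivAt (fun x : ℝ => Complex.exp (a * x)) (a * Complex.exp (a * z)) z := by
  simpa [mul_comm] using ((hasDerivAt_id (z : ℂ)).const_mul a).cexp.comp_ofReal

theorem solvesHill_cexp_neg_mul {p w wd wdd : ℝ → ℂ} (a : ℂ)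
    (hw : ∀ z, HasDerivAt w (wd z) z) (hwd : ∀ z, HasDerivAt wd (wdd z) z)
    (hode : ∀ z, wdd z = 2 * a * wd z + (p z - a ^ 2) * w z) :
    SolvesHill p (fun z => Complex.exp (-a * z) * w z)
      (fun z => Complex.exp (-a * z) * (wd z - a * w z)) := fun z => by
  have he := hasDerivAt_cexp_mul_ofReal (-a) z
  constructor
  · exact (he.mul (hw z)).congr_deriv (by ring)
  · exact (he.mul ((hwd z).fun_sub ((hw z).const_mul a))).congr_deriv (by rw [hode]; ring)

theorem eq_cexp_mul_fundamental_combination {p w wd wdd y1 y1d y2 y2d : ℝ → ℂ} (a : ℂ)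
    (hw : ∀ z, HasDerivAt w (wd z) z) (hwd : ∀ z, HasDerivAt wd (wdd z) z)
    (hode : ∀ z, wdd z = 2 * a * wd z + (p z - a ^ 2) * w z)
    (h1 : SolvesHill p y1 y1d) (h2 : SolvesHill p y2 y2d)
    (h1i : y1 0 = 1) (h1di : y1d 0 = 0) (h2i : y2 0 = 0) (h2di : y2d 0 = 1) (z : ℝ) :
    w z = Complex.exp (a * z) * (w 0 * y1 z + (wd 0 - a * w 0) * y2 z) ∧
      wd z = Complex.exp (a * z) * (a * (w 0 * y1 z + (wd 0 - a * w 0) * y2 z)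
        + (w 0 * y1d z + (wd 0 - a * w 0) * y2d z)) := by
  obtain ⟨hu, hud⟩ := (solvesHill_cexp_neg_mul a hw hwd hode).eq_fundamental_combination
    h1 h2 h1i h1di h2i h2di z
  simp only [Complex.ofReal_zero, mul_zero, Complex.exp_zero, one_mul] at hu hud
  have hinv : Complex.exp (a * z) * Complex.exp (-a * z) = 1 := by
    rw [← Complex.exp_add]; ring_nf; exact Complex.exp_zero
  constructor
  · linear_combination Complex.exp (a * z) * hu - w z * hinv
  · linear_combination Complex.exp (a * z) * (hud + a * hu) - wd z * hinv

theorem kleinGordon_eq_normal_form {c lam q w wd wdd : ℂ} (hc : c ^ 2 - 1 ≠ 0)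
    (h : (c ^ 2 - 1) * wdd - 2 * c * lam * wd + (lam ^ 2 + q) * w = 0) :
    wdd = 2 * (c * lam / (c ^ 2 - 1)) * wd
      + ((lam / (c ^ 2 - 1)) ^ 2 - q / (c ^ 2 - 1) - (c * lam / (c ^ 2 - 1)) ^ 2) * w := by
  field_simp
  linear_combination (c ^ 2 - 1) * h

theorem Matrix.mem_spectrum_smul_conj_iff {n K : Type*} [Fintype n] [DecidableEq n] [CommRing K]
    {C : Matrix n n K} (hC : IsUnit C.det) {r : K} (hr : IsUnit r) (A : Matrix n n K) (μ : K) :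
    r * μ ∈ spectrum K (r • (C * A * C⁻¹)) ↔ μ ∈ spectrum K A := by
  obtain ⟨r, rfl⟩ := hr
  have hconj : spectrum K (C * A * C⁻¹) = spectrum K A :=
    spectrum.units_conjugate (u := Matrix.nonsingInvUnit C hC)
  rw [← hconj]
  exact spectrum.smul_mem_smul_iff

theorem monodromy_conjugation_relation_general
    (c : ℝ) (hc : c ^ 2 ≠ 1) (T : ℝ) (lam : ℂ)
    (Q : ℝ → ℝ)
    (ν : ℂ) (hν : ν = (lam / ((c : ℂ) ^ 2 - 1)) ^ 2)
    (w1 w1d w1dd w2 w2d w2dd : ℝ → ℂ)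
    (hw1 : ∀ z, HasDerivAt w1 (w1d z) z) (hw1d : ∀ z, HasDerivAt w1d (w1dd z) z)
    (hw2 : ∀ z, HasDerivAt w2 (w2d z) z) (hw2d : ∀ z, HasDerivAt w2d (w2dd z) z)
    (hw1ode : ∀ z : ℝ, ((c : ℂ) ^ 2 - 1) * w1dd z - 2 * (c : ℂ) * lam * w1d z
        + (lam ^ 2 + (Q z : ℂ)) * w1 z = 0)
    (hw2ode : ∀ z : ℝ, ((c : ℂ) ^ 2 - 1) * w2dd z - 2 * (c : ℂ) * lam * w2d z
        + (lam ^ 2 + (Q z : ℂ)) * w2 z = 0)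
    (hw1i : w1 0 = 1) (hw1di : w1d 0 = 0) (hw2i : w2 0 = 0) (hw2di : w2d 0 = 1)
    (y1 y1d y2 y2d : ℝ → ℂ)
    (hy1 : ∀ z, HasDerivAt y1 (y1d z) z)
    (hy1d : ∀ z : ℝ, HasDerivAt y1d (ν * y1 z - ((Q z : ℂ) / ((c : ℂ) ^ 2 - 1)) * y1 z) z)
    (hy2 : ∀ z, HasDerivAt y2 (y2d z) z)
    (hy2d : ∀ z : ℝ, HasDerivAt y2d (ν * y2 z - ((Q z : ℂ) / ((c : ℂ) ^ 2 - 1)) * y2 z) z)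
    (hy1i : y1 0 = 1) (hy1di : y1d 0 = 0) (hy2i : y2 0 = 0) (hy2di : y2d 0 = 1)
    (a : ℂ) (ha : a = (c : ℂ) * lam / ((c : ℂ) ^ 2 - 1))
    (M : Matrix (Fin 2) (Fin 2) ℂ) (hM : M = !![w1 T, w2 T; w1d T, w2d T])
    (MH : Matrix (Fin 2) (Fin 2) ℂ) (hMH : MH = !![y1 T, y2 T; y1d T, y2d T])
    (C : Matrix (Fin 2) (Fin 2) ℂ) (hC : C = !![1, 0; a, 1]) :
    M = Complex.exp (a * (T : ℂ)) • (C * MH * C⁻¹) ∧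
    (∀ μ : ℂ, μ ∈ spectrum ℂ MH ↔ Complex.exp (a * (T : ℂ)) * μ ∈ spectrum ℂ M) := by
  have hc' : (c : ℂ) ^ 2 - 1 ≠ 0 := sub_ne_zero.mpr (by exact_mod_cast hc)
  set p : ℝ → ℂ := fun z => ν - (Q z : ℂ) / ((c : ℂ) ^ 2 - 1)
  have hY1 : SolvesHill p y1 y1d := fun z => ⟨hy1 z, by simpa only [p, sub_mul] using hy1d z⟩
  have hY2 : SolvesHill p y2 y2d := fun z => ⟨hy2 z, by simpa only [p, sub_mul] using hy2d z⟩
  have hnormal : ∀ {w wd wdd : ℝ → ℂ}, (∀ z : ℝ, ((c : ℂ) ^ 2 - 1) * wdd z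
      - 2 * (c : ℂ) * lam * wd z + (lam ^ 2 + (Q z : ℂ)) * w z = 0) →
      ∀ z, wdd z = 2 * a * wd z + (p z - a ^ 2) * w z := fun hode z => by
    simpa only [p, ha, hν] using kleinGordon_eq_normal_form hc' (hode z)
  obtain ⟨E1, E2⟩ := eq_cexp_mul_fundamental_combination a hw1 hw1d (hnormal hw1ode)
    hY1 hY2 hy1i hy1di hy2i hy2di T
  obtain ⟨E3, E4⟩ := eq_cexp_mul_fundamental_combination a hw2 hw2d (hnormal hw2ode)
    hY1 hY2 hy1i hy1di hy2i hy2di T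
  have hCinv : C⁻¹ = !![1, 0; -a, 1] := by
    rw [hC, Matrix.inv_def]
    simp [Matrix.det_fin_two_of, Matrix.adjugate_fin_two_of]
  have hMeq : M = Complex.exp (a * (T : ℂ)) • (C * MH * C⁻¹) := by
    rw [hM, hCinv, hC, hMH, E1, E2, E3, E4, hw1i, hw1di, hw2i, hw2di]
    ext i j
    fin_cases i <;> fin_cases j <;> simp <;> ring
  refine ⟨hMeq, fun μ => ?_⟩
  rw [hMeq]
  exact (Matrix.mem_spectrum_smul_conj_iff (by simp [hC]) (Complex.exp_ne_zero _).isUnit MH μ).symm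

theorem monodromy_conjugation_relation
    (c : ℝ) (hc : c ^ 2 ≠ 1) (T : ℝ) (hT : 0 < T) (lam : ℂ)
    (Q : ℝ → ℝ) (hQ : Continuous Q)
    (ν : ℂ) (hν : ν = (lam / ((c : ℂ) ^ 2 - 1)) ^ 2)
    (w1 w1d w1dd w2 w2d w2dd : ℝ → ℂ)
    (hw1 : ∀ z, HasDerivAt w1 (w1d z) z) (hw1d : ∀ z, HasDerivAt w1d (w1dd z) z)
    (hw2 : ∀ z, HasDerivAt w2 (w2d z) z) (hw2d : ∀ z, HasDerivAt w2d (w2dd z) z)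
    (hw1ode : ∀ z : ℝ, ((c : ℂ) ^ 2 - 1) * w1dd z - 2 * (c : ℂ) * lam * w1d z
        + (lam ^ 2 + (Q z : ℂ)) * w1 z = 0)
    (hw2ode : ∀ z : ℝ, ((c : ℂ) ^ 2 - 1) * w2dd z - 2 * (c : ℂ) * lam * w2d z
        + (lam ^ 2 + (Q z : ℂ)) * w2 z = 0)
    (hw1i : w1 0 = 1) (hw1di : w1d 0 = 0) (hw2i : w2 0 = 0) (hw2di : w2d 0 = 1)
    (y1 y1d y2 y2d : ℝ → ℂ)
    (hy1 : ∀ z, HasDerivAt y1 (y1d z) z)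
    (hy1d : ∀ z : ℝ, HasDerivAt y1d (ν * y1 z - ((Q z : ℂ) / ((c : ℂ) ^ 2 - 1)) * y1 z) z)
    (hy2 : ∀ z, HasDerivAt y2 (y2d z) z)
    (hy2d : ∀ z : ℝ, HasDerivAt y2d (ν * y2 z - ((Q z : ℂ) / ((c : ℂ) ^ 2 - 1)) * y2 z) z)
    (hy1i : y1 0 = 1) (hy1di : y1d 0 = 0) (hy2i : y2 0 = 0) (hy2di : y2d 0 = 1)
    (a : ℂ) (ha : a = (c : ℂ) * lam / ((c : ℂ) ^ 2 - 1))
    (M : Matrix (Fin 2) (Fin 2) ℂ) (hM : M = !![w1 T, w2 T; w1d T, w2d T])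
    (MH : Matrix (Fin 2) (Fin 2) ℂ) (hMH : MH = !![y1 T, y2 T; y1d T, y2d T])
    (C : Matrix (Fin 2) (Fin 2) ℂ) (hC : C = !![1, 0; a, 1]) :
    M = Complex.exp (a * (T : ℂ)) • (C * MH * C⁻¹) ∧
    (∀ μ : ℂ, μ ∈ spectrum ℂ MH ↔ Complex.exp (a * (T : ℂ)) * μ ∈ spectrum ℂ M) :=
  monodromy_conjugation_relation_general c hc T lam Q ν hν w1 w1d w1dd w2 w2d w2dd hw1 hw1d hw2 hw2d
    hw1ode hw2ode hw1i hw1di hw2i hw2di y1 y1d y2 y2d hy1 hy1d hy2 hy2d hy1i hy1di hy2i hy2di a ha M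
    hM MH hMH C hC
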